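/- Let A ∈ ℝ^{m×d}, let B ∈ ℝ^{d×m} be a Moore–Penrose pseudoinverse of A, and let J ∈ ℝ^{m×k}. Let X (ℝ^d-valued) and n (ℝ^k-valued) be random vectors on a common probability space with E[‖X‖²] < ∞ and E[‖n‖²] < ∞ (no independence between X and n is required). Then E[ ‖X − B(AX + Jn)‖² ] = Tr( (I_d − BA) E[XXᵀ] ) + Tr( B J E[nnᵀ] Jᵀ Bᵀ ); in particular, the cross term vanishes identically because (I_d − BA) B = 0, and the adversary's MSE under noisy confidence scores decomposes as the noiseless MSE plus the nonnegative noise term Tr(BJ S Jᵀ Bᵀ), where S = E[nnᵀ]. -/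

import Mathlib

/-!
The estimation error is `X − B(AX + Jn) = (I − BA)X − BJn`. From `BAB = B` and `(BA)ᵀ = BA`,
`P = I − BA` is a symmetric idempotent with `PB = 0`, so `PX ⊥ BJn` for every outcome and the
squared error is `Xᵀ P X + nᵀ (BJ)ᵀ BJ n` pointwise; this is why no independence between `X` and
`n` is needed. Taking expectations with `E[xᵀ Q x] = Tr(Q E[x xᵀ])` and cycling the trace of the
noise term gives the formula.
-/

open MeasureTheory Matrix

namespace Matrix

variable {R : Type*} {l m n : Type*} [Fintype l] [Fintype m] [Fintype n]

theorem mulVec_dotProduct_mulVec [CommSemiring R] (P : Matrix l m R) (Q : Matrix l n R)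
    (u : m → R) (v : n → R) : (P *ᵥ u) ⬝ᵥ (Q *ᵥ v) = u ⬝ᵥ (Pᵀ * Q) *ᵥ v := by
  rw [← mulVec_mulVec, dotProduct_transpose_mulVec, dotProduct_comm]

theorem mulVec_sub_mulVec_dotProduct_self [CommRing R] {P : Matrix m m R} {Q : Matrix m n R}
    (hP : Pᵀ * P = P) (hPQ : Pᵀ * Q = 0) (u : m → R) (v : n → R) :
    (P *ᵥ u - Q *ᵥ v) ⬝ᵥ (P *ᵥ u - Q *ᵥ v) = u ⬝ᵥ P *ᵥ u + v ⬝ᵥ (Qᵀ * Q) *ᵥ v := by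
  have hQP : Qᵀ * P = 0 := by rw [← transpose_transpose P, ← transpose_mul, hPQ, transpose_zero]
  simp only [sub_dotProduct, dotProduct_sub, mulVec_dotProduct_mulVec, hP, hPQ, hQP,
    zero_mulVec, dotProduct_zero]
  ring

theorem dotProduct_mulVec_self_eq_sum_sum [CommSemiring R] (Q : Matrix m m R) (x : m → R) :
    x ⬝ᵥ Q *ᵥ x = ∑ i, ∑ j, Q i j * (x j * x i) := by
  simp only [dotProduct, mulVec, Finset.mul_sum]
  exact Finset.sum_congr rfl fun i _ => Finset.sum_congr rfl fun j _ => by ring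

variable [DecidableEq m] [Ring R] {A : Matrix n m R} {B : Matrix m n R}

theorem one_sub_mul_mul_eq_zero_of_mul_mul_eq (h : B * A * B = B) : (1 - B * A) * B = 0 := by
  rw [Matrix.sub_mul, Matrix.one_mul, h, sub_self]

theorem isIdempotentElem_one_sub_mul_of_mul_mul_eq (h : B * A * B = B) :
    IsIdempotentElem (1 - B * A) :=
  IsIdempotentElem.one_sub (by rw [IsIdempotentElem, ← Matrix.mul_assoc, h])

end Matrix

section SecondMoment

variable {Ω ι : Type*} [MeasurableSpace Ω] {μ : Measure Ω} {X : Ω → ι → ℝ}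

noncomputable def secondMomentMatrix (μ : Measure Ω) (X : Ω → ι → ℝ) : Matrix ι ι ℝ :=
  Matrix.of fun i j => ∫ ω, X ω i * X ω j ∂μ

theorem integrable_mul_of_memLp_two (hX : ∀ i, MemLp (fun ω => X ω i) 2 μ) (i j : ι) :
    Integrable (fun ω => X ω i * X ω j) μ :=
  (hX i).integrable_mul (hX j)

theorem integrable_dotProduct_mulVec [Fintype ι] (hX : ∀ i, MemLp (fun ω => X ω i) 2 μ)
    (Q : Matrix ι ι ℝ) :
    Integrable (fun ω => X ω ⬝ᵥ Q *ᵥ X ω) μ := by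
  simp only [dotProduct_mulVec_self_eq_sum_sum]
  exact integrable_finsetSum _ fun i _ => integrable_finsetSum _ fun j _ =>
    (integrable_mul_of_memLp_two hX j i).const_mul (Q i j)

theorem integral_dotProduct_mulVec [Fintype ι] (hX : ∀ i, MemLp (fun ω => X ω i) 2 μ)
    (Q : Matrix ι ι ℝ) :
    ∫ ω, X ω ⬝ᵥ Q *ᵥ X ω ∂μ = trace (Q * secondMomentMatrix μ X) := by
  have hint (i j : ι) : Integrable (fun ω => Q i j * (X ω j * X ω i)) μ :=
    (integrable_mul_of_memLp_two hX j i).const_mul (Q i j)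
  simp only [dotProduct_mulVec_self_eq_sum_sum]
  rw [integral_finsetSum _ fun i _ => integrable_finsetSum _ fun j _ => hint i j, trace]
  refine Finset.sum_congr rfl fun i _ => ?_
  rw [integral_finsetSum _ fun j _ => hint i j]
  simp only [integral_const_mul, diag_apply, mul_apply, secondMomentMatrix, of_apply]

end SecondMoment

theorem mse_with_additive_noise_general
    {m d k : ℕ} (A : Matrix (Fin m) (Fin d) ℝ) (B : Matrix (Fin d) (Fin m) ℝ)
    (h2 : B * A * B = B)
    (h4 : (B * A)ᵀ = B * A)
    (J : Matrix (Fin m) (Fin k) ℝ)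
    {Ω : Type*} [MeasureSpace Ω]
    (X : Ω → Fin d → ℝ) (nse : Ω → Fin k → ℝ)
    (hXL2 : ∀ i, MemLp (fun ω => X ω i) 2)
    (hnL2 : ∀ i, MemLp (fun ω => nse ω i) 2)
    (K₀ : Matrix (Fin d) (Fin d) ℝ)
    (hK₀ : K₀ = Matrix.of fun i j => ∫ ω, X ω i * X ω j)
    (S : Matrix (Fin k) (Fin k) ℝ)
    (hS : S = Matrix.of fun i j => ∫ ω, nse ω i * nse ω j) :
    (1 - B * A) * B = 0 ∧
      (∫ ω, ∑ i, (X ω i - (B *ᵥ (A *ᵥ X ω + J *ᵥ nse ω)) i) ^ 2) =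
        Matrix.trace ((1 - B * A) * K₀) + Matrix.trace (B * J * S * Jᵀ * Bᵀ) := by
  set P := 1 - B * A with hP
  have hPB : P * B = 0 := one_sub_mul_mul_eq_zero_of_mul_mul_eq h2
  have hPsymm : Pᵀ = P := by rw [hP, transpose_sub, transpose_one, h4]
  have hPP : Pᵀ * P = P := by
    rw [hPsymm]
    exact (isIdempotentElem_one_sub_mul_of_mul_mul_eq h2).eq
  have hPN : Pᵀ * (B * J) = 0 := by rw [hPsymm, ← Matrix.mul_assoc, hPB, Matrix.zero_mul]
  have herr (ω : Ω) : X ω - B *ᵥ (A *ᵥ X ω + J *ᵥ nse ω) = P *ᵥ X ω - (B * J) *ᵥ nse ω := by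
    simp only [hP, sub_mulVec, one_mulVec, mulVec_add, mulVec_mulVec]
    abel
  have hsq (ω : Ω) : ∑ i, (X ω i - (B *ᵥ (A *ᵥ X ω + J *ᵥ nse ω)) i) ^ 2 =
      X ω ⬝ᵥ P *ᵥ X ω + nse ω ⬝ᵥ ((B * J)ᵀ * (B * J)) *ᵥ nse ω := by
    rw [← mulVec_sub_mulVec_dotProduct_self hPP hPN, ← herr]
    simp only [dotProduct, sq, Pi.sub_apply]
  refine ⟨hPB, ?_⟩
  rw [integral_congr_ae (ae_of_all _ hsq), integral_add (integrable_dotProduct_mulVec hXL2 P)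
    (integrable_dotProduct_mulVec hnL2 _), integral_dotProduct_mulVec hXL2,
    integral_dotProduct_mulVec hnL2, Matrix.mul_assoc, trace_mul_comm (B * J)ᵀ, hK₀, hS]
  simp only [secondMomentMatrix, transpose_mul, Matrix.mul_assoc]

/-- Under noisy confidence scores, the adversary's least-squares estimate is
`X̂ = B(AX + Jn)`, the cross term vanishes because `(I − BA)B = 0`, and the MSE
decomposes as `E‖X − B(AX + Jn)‖² = Tr((I − BA)K₀) + Tr(BJSJᵀBᵀ)` where
`K₀ = E[XXᵀ]` and `S = E[nnᵀ]` (no independence between `X` and `n` required). -/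
theorem mse_with_additive_noise
    {m d k : ℕ} (A : Matrix (Fin m) (Fin d) ℝ) (B : Matrix (Fin d) (Fin m) ℝ)
    (h1 : A * B * A = A) (h2 : B * A * B = B)
    (h3 : (A * B)ᵀ = A * B) (h4 : (B * A)ᵀ = B * A)
    (J : Matrix (Fin m) (Fin k) ℝ)
    {Ω : Type*} [MeasureSpace Ω] [IsProbabilityMeasure (volume : Measure Ω)]
    (X : Ω → Fin d → ℝ) (nse : Ω → Fin k → ℝ)
    (hXmeas : Measurable X) (hnmeas : Measurable nse)
    (hXL2 : ∀ i, MemLp (fun ω => X ω i) 2)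
    (hnL2 : ∀ i, MemLp (fun ω => nse ω i) 2)
    (K₀ : Matrix (Fin d) (Fin d) ℝ)
    (hK₀ : K₀ = Matrix.of fun i j => ∫ ω, X ω i * X ω j)
    (S : Matrix (Fin k) (Fin k) ℝ)
    (hS : S = Matrix.of fun i j => ∫ ω, nse ω i * nse ω j) :
    (1 - B * A) * B = 0 ∧
      (∫ ω, ∑ i, (X ω i - (B *ᵥ (A *ᵥ X ω + J *ᵥ nse ω)) i) ^ 2) =
        Matrix.trace ((1 - B * A) * K₀) + Matrix.trace (B * J * S * Jᵀ * Bᵀ) :=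
  mse_with_additive_noise_general A B h2 h4 J X nse hXL2 hnL2 K₀ hK₀ S hS
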